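/- arXiv:2205.04548 — 3 statements merged into one kernel-verified Lean document; each statement's English description precedes it below -/
import Mathlib

section
/- Let G = (V, E) be a finite connected weighted graph with nonnegative edge weights w, and let S be a minimum spanning tree of G. Let e = {u, v} (u ≠ v, e ∉ E) be a new edge with nonnegative weight w(e), and let G' be the graph (V, E ∪ {e}) with the extended weight function. The subgraph S ∪ {e} contains a unique cycle C. If f is an edge of C other than e whose weight is maximal among the edges of C \ {e}, and w(f) > w(e), then (S \ {f}) ∪ {e} is a minimum spanning tree of G'. -/
open SimpleGraph

/-- A spanning tree of `G` is a subgraph of `G` (on the same vertex set) that is a tree,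
i.e. connected and acyclic. -/
def IsSpanningTree {V : Type*} (G H : SimpleGraph V) : Prop :=
  H ≤ G ∧ H.IsTree

/-- The total weight of (the edges of) a graph `H` with edge-weight function `w`. -/
noncomputable def treeWeight {V : Type*} [Finite V] (H : SimpleGraph V)
    (w : Sym2 V → ℝ) : ℝ :=
  ∑ e ∈ (Set.toFinite H.edgeSet).toFinset, w e

/-- `H` is a minimum spanning tree of the weighted graph `(G, w)`. -/
def IsMST {V : Type*} [Finite V] (G : SimpleGraph V) (w : Sym2 V → ℝ)
    (H : SimpleGraph V) : Prop :=
  IsSpanningTree G H ∧ ∀ H', IsSpanningTree G H' → treeWeight H w ≤ treeWeight H' w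

/-! The swapped tree `T = S - f + e` is a spanning tree of `G'`, because `f` lies on the cycle
`C` through `e`, and it weighs `w(S) - w(f) + w(e) < w(S)`. A spanning tree `H` of `G'` avoiding
`e` is a spanning tree of `G`, hence weighs at least `w(S)`. If `H` contains `e`, deleting `e`
cuts `H` into two sides; the cycle `C` crosses this cut along `e` and along a second edge `g` of
`S`, and `H - e + g` is a spanning tree of `G`. Hence
`w(S) ≤ w(H) - w(e) + w(g) ≤ w(H) - w(e) + w(f)`, i.e. `w(T) ≤ w(H)`. -/

namespace SimpleGraph

variable {V : Type*} {G H : SimpleGraph V} {u v x y : V}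

lemma mem_edgeSet_of_mem_sup_fromEdgeSet {e : Sym2 V}
    (he : e ∈ (G ⊔ fromEdgeSet {s(u, v)}).edgeSet) (hne : e ≠ s(u, v)) : e ∈ G.edgeSet := by
  rw [edgeSet_sup, edgeSet_fromEdgeSet] at he
  exact he.resolve_right fun h => hne h.1

lemma deleteEdges_le_of_le_sup_fromEdgeSet (h : H ≤ G ⊔ fromEdgeSet {s(u, v)}) :
    H.deleteEdges {s(u, v)} ≤ G :=
  sdiff_le_iff.mpr (sup_comm G _ ▸ h)

lemma Connected.reachable_deleteEdges_or (hG : G.Connected) (z : V) :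
    (G.deleteEdges {s(x, y)}).Reachable z x ∨ (G.deleteEdges {s(x, y)}).Reachable z y := by
  obtain ⟨p⟩ := hG.preconnected z x
  induction p with
  | nil => exact .inl .rfl
  | @cons z c x hadj _ ih =>
    by_cases he : s(z, c) = s(x, y)
    · rcases Sym2.eq_iff.mp he with ⟨rfl, -⟩ | ⟨rfl, -⟩
      · exact .inl .rfl
      · exact .inr .rfl
    · have hzc : (G.deleteEdges {s(x, y)}).Adj z c := by simp [hadj, he]
      exact ih.imp hzc.reachable.trans hzc.reachable.trans

theorem IsTree.deleteEdges_sup_fromEdgeSet {p q : V} (hG : G.IsTree)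
    (hpq : ¬(G.deleteEdges {s(x, y)}).Reachable p q) :
    (G.deleteEdges {s(x, y)} ⊔ fromEdgeSet {s(p, q)}).IsTree := by
  set D := G.deleteEdges {s(x, y)}
  have hD : D ≤ D ⊔ fromEdgeSet {s(p, q)} := le_sup_left
  have hpq_new : (D ⊔ fromEdgeSet {s(p, q)}).Reachable p q :=
    Adj.reachable (.inr ⟨rfl, fun h => hpq (h ▸ .rfl)⟩)
  -- `p` and `q` lie on different sides of the bridge, so the new edge reconnects `x` and `y`
  have hxy : (D ⊔ fromEdgeSet {s(p, q)}).Reachable x y := by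
    rcases hG.connected.reachable_deleteEdges_or (x := x) (y := y) p with hp | hp <;>
      rcases hG.connected.reachable_deleteEdges_or (x := x) (y := y) q with hq | hq
    · exact absurd (hp.trans hq.symm) hpq
    · exact ((hp.mono hD).symm.trans hpq_new).trans (hq.mono hD)
    · exact ((hq.mono hD).symm.trans hpq_new.symm).trans (hp.mono hD)
    · exact absurd (hp.trans hq.symm) hpq
  have hx (z : V) : (D ⊔ fromEdgeSet {s(p, q)}).Reachable z x :=
    (hG.connected.reachable_deleteEdges_or z).elim (·.mono hD)
      fun h => (h.mono hD).trans hxy.symm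
  have := hG.connected.nonempty
  exact ⟨⟨fun a b => (hx a).trans (hx b).symm⟩,
    (hG.isAcyclic.anti (deleteEdges_le _)).sup_edge_of_not_reachable hpq⟩

theorem IsAcyclic.mem_edges_of_isCycle_sup_fromEdgeSet (hG : G.IsAcyclic) {a : V}
    {C : (G ⊔ fromEdgeSet {s(u, v)}).Walk a a} (hC : C.IsCycle) : s(u, v) ∈ C.edges := by
  by_contra he
  have hCG : ∀ e ∈ C.edges, e ∈ G.edgeSet := fun e h =>
    mem_edgeSet_of_mem_sup_fromEdgeSet (C.edges_subset_edgeSet h) (ne_of_mem_of_not_mem h he)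
  exact hG (C.transfer G hCG) (hC.transfer hCG)

theorem Walk.IsCycle.exists_boundary_edge {a : V} {C : G.Walk a a} (hC : C.IsCycle)
    (he : s(u, v) ∈ C.edges) (P : Set V) (hu : u ∈ P) (hv : v ∉ P) :
    ∃ x y, s(x, y) ∈ C.edges ∧ s(x, y) ≠ s(u, v) ∧ x ∈ P ∧ y ∉ P := by
  -- `C` minus `s(u, v)` still joins `u` to `v`, inside the graph formed by the edges of `C`
  set K := fromEdgeSet {e | e ∈ C.edges}
  have hCK : ∀ e ∈ C.edges, e ∈ K.edgeSet := fun e h => by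
    simp [K, h, G.not_isDiag_of_mem_edgeSet (C.edges_subset_edgeSet h)]
  obtain ⟨-, ⟨p⟩⟩ := adj_and_reachable_delete_edges_iff_exists_cycle.mpr
    ⟨a, C.transfer K hCK, hC.transfer hCK, by rwa [Walk.edges_transfer]⟩
  obtain ⟨d, hd, hdu, hdv⟩ := p.exists_boundary_dart P hu hv
  have hdK := p.edges_subset_edgeSet (List.mem_map_of_mem (f := Dart.edge) hd)
  simp only [K, edgeSet_deleteEdges, edgeSet_fromEdgeSet] at hdK
  exact ⟨d.fst, d.snd, hdK.1.1, hdK.2, hdu, hdv⟩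

theorem IsAcyclic.not_reachable_deleteEdges_of_isCycle_sup_fromEdgeSet (hG : G.IsAcyclic)
    {a : V} {C : (G ⊔ fromEdgeSet {s(u, v)}).Walk a a} (hC : C.IsCycle)
    (hf : s(x, y) ∈ C.edges) (hfe : s(x, y) ≠ s(u, v)) :
    ¬(G.deleteEdges {s(x, y)}).Reachable u v := by
  intro huv
  have hfG := mem_edgeSet_of_mem_sup_fromEdgeSet (C.edges_subset_edgeSet hf) hfe
  -- the only edge of `C` that can cross the cut of the bridge `s(x, y)` is `s(u, v)`
  obtain ⟨x₀, y₀, hC₀, hne, hx₀, hy₀⟩ := hC.exists_boundary_edge hf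
    {z | (G.deleteEdges {s(x, y)}).Reachable x z} .rfl
    (isAcyclic_iff_forall_isBridge.mp hG hfG)
  have hcross : s(x₀, y₀) = s(u, v) := by
    by_contra h
    exact hy₀ (hx₀.trans (Adj.reachable ((deleteEdges_adj ..).mpr
      ⟨mem_edgeSet_of_mem_sup_fromEdgeSet (C.edges_subset_edgeSet hC₀) h, hne⟩)))
  rcases Sym2.eq_iff.mp hcross with ⟨rfl, rfl⟩ | ⟨rfl, rfl⟩
  · exact hy₀ (hx₀.trans huv)
  · exact hy₀ (hx₀.trans huv.symm)

end SimpleGraph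

section

variable {V : Type*} {G H : SimpleGraph V} {u v : V}

lemma treeWeight_deleteEdges_sup_fromEdgeSet [Finite V] (w : Sym2 V → ℝ) {e : Sym2 V}
    (he : e ∈ G.edgeSet) {p q : V} (hpq : ¬(G.deleteEdges {e}).Reachable p q)
    (hne : s(p, q) ≠ e) :
    treeWeight (G.deleteEdges {e} ⊔ fromEdgeSet {s(p, q)}) w =
      treeWeight G w - w e + w s(p, q) := by
  classical
  have hdiag : ¬s(p, q).IsDiag := fun h => hpq (Sym2.mk_isDiag_iff.mp h ▸ .rfl)
  have hnew : s(p, q) ∉ G.edgeSet := fun h =>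
    hpq ((deleteEdges_adj ..).mpr ⟨h, hne⟩).reachable
  have hset : (Set.toFinite (G.deleteEdges {e} ⊔ fromEdgeSet {s(p, q)}).edgeSet).toFinset =
      insert s(p, q) ((Set.toFinite G.edgeSet).toFinset.erase e) := by
    ext g
    simp only [Set.Finite.mem_toFinset, edgeSet_sup, edgeSet_deleteEdges, edgeSet_fromEdgeSet,
      Set.mem_union, Set.mem_sdiff, Set.mem_singleton_iff, Sym2.mem_diagSet, Finset.mem_insert,
      Finset.mem_erase]
    grind
  rw [treeWeight, treeWeight, hset, Finset.sum_insert (by simp [hnew]),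
    ← Finset.sum_erase_add _ _ ((Set.toFinite G.edgeSet).mem_toFinset.mpr he)]
  ring

lemma IsSpanningTree.of_sup_fromEdgeSet (hH : IsSpanningTree (G ⊔ fromEdgeSet {s(u, v)}) H)
    (he : s(u, v) ∉ H.edgeSet) : IsSpanningTree G H := by
  refine ⟨?_, hH.2⟩
  simpa [deleteEdges_eq_self.mpr (Set.disjoint_singleton_right.mpr he)] using
    deleteEdges_le_of_le_sup_fromEdgeSet hH.1

lemma IsSpanningTree.exists_swap_of_isCycle [Finite V]
    (hH : IsSpanningTree (G ⊔ fromEdgeSet {s(u, v)}) H) (he : s(u, v) ∈ H.edgeSet) {a : V}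
    {C : (G ⊔ fromEdgeSet {s(u, v)}).Walk a a} (hC : C.IsCycle) (heC : s(u, v) ∈ C.edges)
    (w : Sym2 V → ℝ) :
    ∃ g ∈ C.edges, g ≠ s(u, v) ∧ ∃ H₀, IsSpanningTree G H₀ ∧
      treeWeight H₀ w = treeWeight H w - w s(u, v) + w g := by
  obtain ⟨x, y, hxy, hne, hx, hy⟩ := hC.exists_boundary_edge heC
    {z | (H.deleteEdges {s(u, v)}).Reachable u z} .rfl
    (isAcyclic_iff_forall_isBridge.mp hH.2.isAcyclic he)
  have hsep : ¬(H.deleteEdges {s(u, v)}).Reachable x y := fun h => hy (hx.trans h)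
  have hxyG : G.Adj x y := mem_edgeSet_of_mem_sup_fromEdgeSet (C.edges_subset_edgeSet hxy) hne
  have hle : fromEdgeSet {s(x, y)} ≤ G :=
    G.fromEdgeSet_le.mpr (by rintro e ⟨rfl, -⟩; exact hxyG)
  refine ⟨s(x, y), hxy, hne, _, ⟨sup_le (deleteEdges_le_of_le_sup_fromEdgeSet hH.1) hle, ?_⟩,
    treeWeight_deleteEdges_sup_fromEdgeSet w he hsep hne⟩
  exact hH.2.deleteEdges_sup_fromEdgeSet hsep

end

theorem mst_edge_swap_general {V : Type*} [Fintype V]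
    (G : SimpleGraph V) (w : Sym2 V → ℝ)
    (S : SimpleGraph V) (hS : IsMST G w S)
    (u v : V)
    (a : V) (C : (S ⊔ fromEdgeSet {s(u, v)}).Walk a a) (hC : C.IsCycle)
    (f : Sym2 V) (hf : f ∈ C.edges) (hfe : f ≠ s(u, v))
    (hmax : ∀ f' ∈ C.edges, f' ≠ s(u, v) → w f' ≤ w f)
    (hlt : w s(u, v) < w f) :
    IsMST (G ⊔ fromEdgeSet {s(u, v)}) w
      ((S.deleteEdges {f}) ⊔ fromEdgeSet {s(u, v)}) := by
  obtain ⟨⟨hSG, hStree⟩, hSmin⟩ := hS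
  induction f using Sym2.ind with | _ x y => ?_
  have hsep := hStree.isAcyclic.not_reachable_deleteEdges_of_isCycle_sup_fromEdgeSet hC hf hfe
  have hfS := mem_edgeSet_of_mem_sup_fromEdgeSet (C.edges_subset_edgeSet hf) hfe
  have hwT := treeWeight_deleteEdges_sup_fromEdgeSet w hfS hsep hfe.symm
  refine ⟨⟨sup_le_sup_right ((deleteEdges_le _).trans hSG) _,
    hStree.deleteEdges_sup_fromEdgeSet hsep⟩, fun H hH => ?_⟩
  by_cases heH : s(u, v) ∈ H.edgeSet
  · have hle : S ⊔ fromEdgeSet {s(u, v)} ≤ G ⊔ fromEdgeSet {s(u, v)} :=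
      sup_le_sup_right hSG _
    have heC := hStree.isAcyclic.mem_edges_of_isCycle_sup_fromEdgeSet hC
    obtain ⟨g, hgC, hge, H₀, hH₀, hwH₀⟩ := hH.exists_swap_of_isCycle heH (hC.mapLe hle)
      (by rwa [Walk.edges_mapLe_eq_edges]) w
    rw [Walk.edges_mapLe_eq_edges] at hgC
    linarith [hSmin H₀ hH₀, hmax g hgC hge]
  · linarith [hSmin H (hH.of_sup_fromEdgeSet heH)]

/-- Cycle property / edge swap: if `S` is an MST of `G`, a new edge `e = s(u,v) ∉ E` is
added to `G`, `C` is the (unique) cycle of `S ∪ {e}`, and `f` is an edge of `C` other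
than `e` of maximal weight among the edges of `C \ {e}` with `w f > w e`, then
`(S \ {f}) ∪ {e}` is an MST of `G' = (V, E ∪ {e})`. -/
theorem mst_edge_swap {V : Type*} [Fintype V]
    (G : SimpleGraph V) (w : Sym2 V → ℝ)
    (hG : G.Connected) (hw : ∀ e, 0 ≤ w e)
    (S : SimpleGraph V) (hS : IsMST G w S)
    (u v : V) (huv : u ≠ v) (he : ¬ G.Adj u v)
    (a : V) (C : (S ⊔ fromEdgeSet {s(u, v)}).Walk a a) (hC : C.IsCycle)
    (f : Sym2 V) (hf : f ∈ C.edges) (hfe : f ≠ s(u, v))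
    (hmax : ∀ f' ∈ C.edges, f' ≠ s(u, v) → w f' ≤ w f)
    (hlt : w s(u, v) < w f) :
    IsMST (G ⊔ fromEdgeSet {s(u, v)}) w
      ((S.deleteEdges {f}) ⊔ fromEdgeSet {s(u, v)}) :=
  mst_edge_swap_general G w S hS u v a C hC f hf hfe hmax hlt
end

section
/- Let G = (V, E) be a finite connected weighted graph with nonnegative edge weights w and let S be a minimum spanning tree of G. For any two distinct vertices u, v ∈ V, the maximum edge weight along the unique path in S from u to v equals the minimum over all u–v paths P in G of the maximum edge weight along P (the bottleneck value of u and v in G). -/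
/-!
If the heaviest edge `ab` of the tree path from `u` to `v` is deleted from the MST `S`,
then `u` and `v` fall into different components of `S - ab`. Any `u`–`v` path of `G` has an
edge `xy` joining these components, and exchanging `ab` for `xy` yields another spanning tree;
minimality of `S` forces `w(ab) ≤ w(xy)`.
-/

open SimpleGraph

namespace SimpleGraph

variable {V : Type*} {H : SimpleGraph V}

theorem Walk.reachable_deleteEdges_or {z a : V} (q : H.Walk z a) (b : V) :
    (H.deleteEdges {s(a, b)}).Reachable z a ∨ (H.deleteEdges {s(a, b)}).Reachable z b := by
  induction q with
  | nil => exact .inl .rfl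
  | @cons z c a hzc q ih =>
    by_cases he : s(z, c) = s(a, b)
    · rcases Sym2.eq_iff.mp he with ⟨rfl, -⟩ | ⟨rfl, -⟩
      exacts [.inl .rfl, .inr .rfl]
    · have hadj : (H.deleteEdges {s(a, b)}).Adj z c := deleteEdges_adj.mpr ⟨hzc, he⟩
      exact ih.imp hadj.reachable.trans hadj.reachable.trans

theorem Connected.reachable_deleteEdges_or_of_not_reachable (hH : H.Connected)
    {a b x y : V} (hxy : ¬ (H.deleteEdges {s(a, b)}).Reachable x y) (z : V) :
    (H.deleteEdges {s(a, b)}).Reachable x z ∨ (H.deleteEdges {s(a, b)}).Reachable y z := by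
  have side (t : V) := (hH t a).some.reachable_deleteEdges_or b
  rcases side z with hz | hz <;> rcases side x with hx | hx <;> rcases side y with hy | hy <;>
    first
    | exact .inl (hx.trans hz.symm)
    | exact .inr (hy.trans hz.symm)
    | exact absurd (hx.trans hy.symm) hxy

theorem IsTree.deleteEdges_sup_edge {S : SimpleGraph V} (hS : S.IsTree) {a b x y : V}
    (hxy : ¬ (S.deleteEdges {s(a, b)}).Reachable x y) :
    (S.deleteEdges {s(a, b)} ⊔ edge x y).IsTree := by
  refine ⟨(connected_iff_exists_forall_reachable _).mpr ⟨x, fun z => ?_⟩,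
    (hS.isAcyclic.anti (deleteEdges_le _)).sup_edge_of_not_reachable hxy⟩
  have hxy' : (S.deleteEdges {s(a, b)} ⊔ edge x y).Adj x y :=
    Or.inr ((edge_adj ..).mpr ⟨Or.inl ⟨rfl, rfl⟩, fun h => hxy (h ▸ .rfl)⟩)
  rcases hS.connected.reachable_deleteEdges_or_of_not_reachable hxy z with h | h
  · exact h.mono le_sup_left
  · exact hxy'.reachable.trans (h.mono le_sup_left)

theorem IsAcyclic.not_reachable_deleteEdges_of_mem_edges (hH : H.IsAcyclic) {u v : V}
    {p : H.Walk u v} (hp : p.IsPath) {e : Sym2 V} (he : e ∈ p.edges) :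
    ¬ (H.deleteEdges {e}).Reachable u v := by
  classical
  rintro ⟨r⟩
  have hrp : p = r.toPath.1.mapLe (deleteEdges_le _) := congrArg Subtype.val <|
    (hH.subsingleton_path u v).elim ⟨p, hp⟩ ⟨_, r.toPath.isPath.mapLe _⟩
  rw [hrp, Walk.edges_mapLe_eq_edges] at he
  have := r.edges_subset_edgeSet (r.edges_toPath_subset_edges he)
  simp [edgeSet_deleteEdges] at this

end SimpleGraph

section MinimumSpanningTree

variable {V : Type*} [Finite V] {w : Sym2 V → ℝ}

theorem treeWeight_add_of_edgeSet_eq_insert {H T : SimpleGraph V} {e f : Sym2 V}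
    (hT : T.edgeSet = insert f (H.edgeSet \ {e})) (he : e ∈ H.edgeSet)
    (hf : f ∉ H.edgeSet \ {e}) :
    treeWeight T w + w e = treeWeight H w + w f := by
  classical
  have hfin : (Set.toFinite T.edgeSet).toFinset
      = insert f (((Set.toFinite H.edgeSet).toFinset).erase e) := by
    ext g
    simp [hT, and_comm]
  rw [treeWeight, treeWeight, hfin, Finset.sum_insert (by simpa [and_comm] using hf),
    Finset.sum_erase_eq_sub (by simpa using he)]
  ring

theorem IsMST.weight_le_of_not_reachable_deleteEdges {G S : SimpleGraph V} (hS : IsMST G w S)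
    {a b x y : V} (hab : S.Adj a b) (hxy : G.Adj x y)
    (hsep : ¬ (S.deleteEdges {s(a, b)}).Reachable x y) :
    w s(a, b) ≤ w s(x, y) := by
  set T := S.deleteEdges {s(a, b)} ⊔ edge x y
  have hTG : T ≤ G := sup_le ((deleteEdges_le _).trans hS.1.1) ((edge_le_iff _).mpr (.inr hxy))
  have hTedges : T.edgeSet = insert s(x, y) (S.edgeSet \ {s(a, b)}) := by
    rw [edgeSet_sup, edgeSet_deleteEdges, edgeSet_edge_of_ne hxy.ne, Set.union_singleton]
  have hxyS : s(x, y) ∉ S.edgeSet \ {s(a, b)} := fun h =>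
    hsep (deleteEdges_adj.mpr ⟨h.1, h.2⟩).reachable
  have hweight := treeWeight_add_of_edgeSet_eq_insert (w := w) hTedges hab hxyS
  have hmin := hS.2 T ⟨hTG, hS.1.2.deleteEdges_sup_edge hsep⟩
  linarith

end MinimumSpanningTree

theorem mst_path_max_eq_bottleneck_general {V : Type*} [Fintype V]
    (G : SimpleGraph V) (w : Sym2 V → ℝ)
    (S : SimpleGraph V) (hS : IsMST G w S)
    (u v : V)
    (p : S.Walk u v) (hp : p.IsPath)
    (m : ℝ) (hm : IsGreatest (w '' {f | f ∈ p.edges}) m) :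
    IsLeast {x : ℝ | ∃ q : G.Walk u v, q.IsPath ∧ IsGreatest (w '' {f | f ∈ q.edges}) x}
      m := by
  refine ⟨⟨p.mapLe hS.1.1, hp.mapLe _, by simpa only [Walk.edges_mapLe_eq_edges] using hm⟩, ?_⟩
  rintro x ⟨q, -, hq⟩
  obtain ⟨⟨a, b⟩, hab, rfl⟩ := hm.1
  have hsep := hS.1.2.isAcyclic.not_reachable_deleteEdges_of_mem_edges hp hab
  obtain ⟨d, hd, hdu, hdv⟩ :=
    q.exists_boundary_dart {z | (S.deleteEdges {s(a, b)}).Reachable u z} .rfl hsep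
  calc w s(a, b) ≤ w d.edge :=
        hS.weight_le_of_not_reachable_deleteEdges (p.adj_of_mem_edges hab) d.adj
          fun h => hdv (hdu.trans h)
    _ ≤ x := hq.2 ⟨d.edge, List.mem_map_of_mem hd, rfl⟩

/-- Minimax (bottleneck) property of MSTs: if `S` is an MST of `G` and `m` is the
maximum edge weight along the unique path `p` in `S` from `u` to `v` (`u ≠ v`), then `m`
is the least element of the set of "maximum edge weights along a `u`–`v` path of `G`",
i.e. `m` equals the bottleneck value of `u` and `v` in `G`. -/
theorem mst_path_max_eq_bottleneck {V : Type*} [Fintype V]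
    (G : SimpleGraph V) (w : Sym2 V → ℝ)
    (hG : G.Connected) (hw : ∀ e, 0 ≤ w e)
    (S : SimpleGraph V) (hS : IsMST G w S)
    (u v : V) (huv : u ≠ v)
    (p : S.Walk u v) (hp : p.IsPath)
    (m : ℝ) (hm : IsGreatest (w '' {f | f ∈ p.edges}) m) :
    IsLeast {x : ℝ | ∃ q : G.Walk u v, q.IsPath ∧ IsGreatest (w '' {f | f ∈ q.edges}) x}
      m :=
  mst_path_max_eq_bottleneck_general G w S hS u v p hp m hm
end

section
/- Let G = (V, E) be a finite connected weighted graph with nonnegative edge weights w and let T ⊆ V with |T| ≥ 2. Let M denote the minimum total weight of a spanning tree of the metric completion of T, and let SMT denote the minimum total edge weight of a connected subgraph of G whose vertex set contains T (a Steiner tree for T in G). Then M ≤ 2 · SMT. -/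
open SimpleGraph

/-- Weighted graph distance: the minimum (infimum) total weight of a walk from `u` to
`v` in `G`. -/
noncomputable def wdist {V : Type*} (G : SimpleGraph V) (w : Sym2 V → ℝ) (u v : V) : ℝ :=
  sInf {x | ∃ p : G.Walk u v, x = (p.edges.map w).sum}

/-- The total edge weight of a subgraph of `G`. -/
noncomputable def subgraphWeight {V : Type*} [Finite V] {G : SimpleGraph V}
    (H : G.Subgraph) (w : Sym2 V → ℝ) : ℝ :=
  ∑ e ∈ (Set.toFinite H.edgeSet).toFinset, w e

/-!
A connected graph has a closed walk through all of its vertices of weight at most twice its total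
edge weight; for the Steiner tree `St` this walk visits every terminal. Shortcutting it between
consecutive terminals gives a connected graph on the terminals whose metric-completion weight is
at most that of the walk, since each shortcut edge `{s, t}` costs `dist(s, t)`, which is at most
the weight of the piece of walk it replaces. A spanning tree of that graph bounds the minimum
spanning tree.
-/

namespace SimpleGraph

variable {V : Type*} {G : SimpleGraph V}

namespace Walk

noncomputable def weight {u v : V} (p : G.Walk u v) (w : Sym2 V → ℝ) : ℝ := (p.edges.map w).sum

variable {w : Sym2 V → ℝ} {u v x : V}

@[simp] lemma weight_nil : (nil : G.Walk u u).weight w = 0 := rfl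

@[simp] lemma weight_cons (h : G.Adj u v) (p : G.Walk v x) :
    (cons h p).weight w = w s(u, v) + p.weight w := by
  simp [weight]

@[simp] lemma weight_append (p : G.Walk u v) (q : G.Walk v x) :
    (p.append q).weight w = p.weight w + q.weight w := by
  simp [weight]

@[simp] lemma weight_concat (p : G.Walk u v) (h : G.Adj v x) :
    (p.concat h).weight w = p.weight w + w s(v, x) := by
  simp [weight, edges_concat]

lemma weight_map {V' : Type*} {G' : SimpleGraph V'} (f : G →g G') (p : G.Walk u v)
    (w : Sym2 V' → ℝ) : (p.map f).weight w = p.weight (w ∘ Sym2.map f) := by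
  simp [weight, edges_map]

@[simp] lemma weight_rotate [DecidableEq V] (c : G.Walk v v) (h : u ∈ c.support) :
    (c.rotate u h).weight w = c.weight w :=
  ((rotate_edges c u h).perm.map w).sum_eq

lemma weight_nonneg (hw : ∀ e, 0 ≤ w e) (p : G.Walk u v) : 0 ≤ p.weight w :=
  List.sum_nonneg (by simpa using fun e _ => hw e)

lemma exists_detour {a c x y : V} (p : G.Walk a c) (hx : x ∈ p.support)
    (h : G.Adj x y) :
    ∃ r : G.Walk a c, (∀ z ∈ p.support, z ∈ r.support) ∧ y ∈ r.support ∧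
      r.weight w = p.weight w + 2 * w s(x, y) := by
  obtain ⟨q, r, rfl⟩ := mem_support_iff_exists_append.1 hx
  refine ⟨q.append (cons h (cons h.symm r)), fun z hz => ?_, by simp, ?_⟩
  · simp only [mem_support_append_iff, support_cons, List.mem_cons] at hz ⊢
    tauto
  · simp only [weight_append, weight_cons, Sym2.eq_swap (a := y)]
    ring

end Walk

variable {w : Sym2 V → ℝ}

lemma wdist_le_weight (hw : ∀ e, 0 ≤ w e) {u v : V} (p : G.Walk u v) :
    wdist G w u v ≤ p.weight w :=
  csInf_le ⟨0, by rintro _ ⟨q, rfl⟩; exact q.weight_nonneg hw⟩ ⟨p, rfl⟩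

lemma wdist_nonneg (hw : ∀ e, 0 ≤ w e) (u v : V) : 0 ≤ wdist G w u v :=
  Real.sInf_nonneg (by rintro _ ⟨q, rfl⟩; exact q.weight_nonneg hw)

lemma reachable_edge (s t : V) : (edge s t).Reachable s t := by
  by_cases h : s = t
  · exact h ▸ Reachable.rfl
  · exact Adj.reachable (by simp [edge_adj, h])

section TreeWeight

variable {W : Type*} [Finite W] {wt : Sym2 W → ℝ}

lemma treeWeight_nonneg (hwt : ∀ e, 0 ≤ wt e) (S : SimpleGraph W) : 0 ≤ treeWeight S wt :=
  Finset.sum_nonneg fun e _ => hwt e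

@[simp] lemma treeWeight_bot : treeWeight (⊥ : SimpleGraph W) wt = 0 := by
  simp [treeWeight]

lemma treeWeight_mono (hwt : ∀ e, 0 ≤ wt e) {S S' : SimpleGraph W} (h : S ≤ S') :
    treeWeight S wt ≤ treeWeight S' wt :=
  Finset.sum_le_sum_of_subset_of_nonneg (by simpa using edgeSet_mono h) fun e _ _ => hwt e

lemma treeWeight_sup_le (hwt : ∀ e, 0 ≤ wt e) (S S' : SimpleGraph W) :
    treeWeight (S ⊔ S') wt ≤ treeWeight S wt + treeWeight S' wt := by
  classical
  simp only [treeWeight, edgeSet_sup]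
  rw [Set.Finite.toFinset_union (Set.toFinite _) (Set.toFinite _), ← Finset.sum_union_inter]
  exact le_add_of_nonneg_right (Finset.sum_nonneg fun e _ => hwt e)

lemma treeWeight_edge_le (hwt : ∀ e, 0 ≤ wt e) (s t : W) :
    treeWeight (edge s t) wt ≤ wt s(s, t) := by
  by_cases h : s = t
  · simpa [h, edge_self_eq_bot] using hwt _
  · simp [treeWeight, edgeSet_edge_of_ne h]

lemma treeWeight_deleteEdges_add {S : SimpleGraph W} {e : Sym2 W} (he : e ∈ S.edgeSet) :
    treeWeight (S.deleteEdges {e}) wt + wt e = treeWeight S wt := by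
  classical
  simp only [treeWeight, edgeSet_deleteEdges]
  rw [Set.Finite.toFinset_sdiff (Set.toFinite _) (Set.toFinite _), Set.Finite.toFinset_singleton,
    Finset.sdiff_singleton_eq_erase]
  exact Finset.sum_erase_add _ _ (by simpa using he)

lemma treeWeight_spanningCoe {s : Set W} (S : SimpleGraph s) :
    treeWeight S.spanningCoe wt = treeWeight S (wt ∘ Sym2.map (↑)) := by
  classical
  simp only [treeWeight, edgeSet_map]
  rw [Set.Finite.toFinset_image _ (Set.toFinite _), Finset.sum_image]
  · rfl
  · exact fun _ _ _ _ h => Sym2.map.injective Subtype.val_injective h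

lemma treeWeight_induce_compl_singleton_add_le {S : SimpleGraph W} (hwt : ∀ e, 0 ≤ wt e) {v b : W} (h : S.Adj v b) :
    treeWeight (S.induce {v}ᶜ) (wt ∘ Sym2.map (↑)) + wt s(v, b) ≤ treeWeight S wt := by
  rw [← treeWeight_spanningCoe, ← treeWeight_deleteEdges_add (S.mem_edgeSet.2 h)]
  gcongr
  refine treeWeight_mono hwt ?_
  rintro _ _ ⟨-, x, y, hxy, rfl, rfl⟩
  refine ⟨hxy, ?_⟩
  rintro ⟨he, -⟩
  rcases Sym2.eq_iff.1 he with ⟨hx, -⟩ | ⟨-, hy⟩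
  exacts [x.2 hx, y.2 hy]

/-- Induction on the number of vertices: remove a vertex `v` whose removal keeps `S` connected and
splice the excursion `b → v → b`, for a neighbour `b` of `v`, into a tour of the rest. -/
theorem Connected.exists_spanning_closed_walk_weight_le {S : SimpleGraph W} (hS : S.Connected)
    (hwt : ∀ e, 0 ≤ wt e) :
    ∃ a, ∃ p : S.Walk a a, (∀ x, x ∈ p.support) ∧ p.weight wt ≤ 2 * treeWeight S wt := by
  induction hn : Nat.card W using Nat.strong_induction_on generalizing W with
  | _ n ih =>
    rcases subsingleton_or_nontrivial W with hW | hW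
    · obtain ⟨a⟩ := hS.nonempty
      exact ⟨a, Walk.nil, fun x => by simp [Subsingleton.elim x a], by
        simpa using treeWeight_nonneg hwt S⟩
    obtain ⟨v, hv⟩ := hS.exists_connected_induce_compl_singleton_of_finite_nontrivial
    obtain ⟨b, hvb⟩ := hS.preconnected.exists_adj_of_nontrivial v
    have hcard : Nat.card ↥({v}ᶜ : Set W) < n :=
      hn ▸ Finite.card_subtype_lt (p := (· ∈ ({v}ᶜ : Set W))) (x := v) (by simp)
    obtain ⟨a, p, hp, hpw⟩ := ih _ hcard hv (wt := wt ∘ Sym2.map (↑)) (fun _ => hwt _) rfl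
    let q := p.map (Embedding.induce {v}ᶜ).toHom
    have hq : ∀ x ≠ v, x ∈ q.support := fun x hx =>
      (Walk.support_map _ p).symm ▸ List.mem_map.2 ⟨⟨x, hx⟩, hp _, rfl⟩
    obtain ⟨r, hqr, hvr, hrw⟩ := q.exists_detour (w := wt) (hq b hvb.ne') hvb.symm
    refine ⟨_, r, fun x => ?_, ?_⟩
    · by_cases hx : x = v
      · exact hx ▸ hvr
      · exact hqr x (hq x hx)
    · have hrest := treeWeight_induce_compl_singleton_add_le hwt hvb
      have hqw : q.weight wt = p.weight (wt ∘ Sym2.map (↑)) := Walk.weight_map _ p wt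
      rw [Sym2.eq_swap] at hrw
      linarith

end TreeWeight

lemma subgraphWeight_eq_treeWeight_coe [Finite V] (St : G.Subgraph) :
    subgraphWeight St w = treeWeight St.coe (w ∘ Sym2.map (↑)) := by
  rw [← treeWeight_spanningCoe, Subgraph.spanningCoe_coe]
  simp only [subgraphWeight, treeWeight, Subgraph.edgeSet_spanningCoe]

theorem Subgraph.Connected.exists_closed_walk_weight_le [Finite V] {St : G.Subgraph}
    (hSt : St.Connected) (hw : ∀ e, 0 ≤ w e) {u : V} (hu : u ∈ St.verts) :
    ∃ p : G.Walk u u, (∀ x ∈ St.verts, x ∈ p.support) ∧ p.weight w ≤ 2 * subgraphWeight St w := by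
  classical
  obtain ⟨a, p, hp, hpw⟩ :=
    hSt.coe.exists_spanning_closed_walk_weight_le (wt := w ∘ Sym2.map (↑)) fun _ => hw _
  let q := p.map St.hom
  have hq : ∀ x ∈ St.verts, x ∈ q.support := fun x hx =>
    (Walk.support_map _ p).symm ▸ List.mem_map.2 ⟨⟨x, hx⟩, hp _, rfl⟩
  refine ⟨q.rotate u (hq u hu), fun x hx => (Walk.mem_support_rotate_iff ..).2 (hq x hx), ?_⟩
  rw [Walk.weight_rotate, Walk.weight_map, subgraphWeight_eq_treeWeight_coe]
  exact hpw

variable {T : Set V} {wN : Sym2 T → ℝ}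

lemma nonneg_of_eq_wdist (hw : ∀ e, 0 ≤ w e) (hwN : ∀ a b : T, wN s(a, b) = wdist G w a b)
    (e : Sym2 T) : 0 ≤ wN e :=
  e.ind fun a b => hwN a b ▸ wdist_nonneg hw _ _

variable [Finite T]

lemma treeWeight_edge_le_weight (hw : ∀ e, 0 ≤ w e)
    (hwN : ∀ a b : T, wN s(a, b) = wdist G w a b) {a b : T} (q : G.Walk a b) :
    treeWeight (edge a b) wN ≤ q.weight w :=
  (treeWeight_edge_le (nonneg_of_eq_wdist hw hwN) a b).trans
    ((hwN a b).trans_le (wdist_le_weight hw q))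

/-- `q` is the stretch of walk since the last terminal `t`; it pays for the shortcut edge from `t`
to the next terminal. -/
lemma exists_reachable_weight_le_of_walk (hw : ∀ e, 0 ≤ w e)
    (hwN : ∀ a b : T, wN s(a, b) = wdist G w a b) {u v : V} (p : G.Walk u v) {t : V}
    (ht : t ∈ T) (q : G.Walk t u) :
    ∃ Q : SimpleGraph T, (∀ x : T, (x : V) ∈ p.support → Q.Reachable ⟨t, ht⟩ x) ∧
      treeWeight Q wN ≤ q.weight w + p.weight w := by
  induction p generalizing t with
  | @nil u =>
    by_cases hu : u ∈ T
    · refine ⟨edge ⟨t, ht⟩ ⟨u, hu⟩, fun x hx => ?_, ?_⟩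
      · obtain rfl : x = ⟨u, hu⟩ := Subtype.ext (by simpa using hx)
        exact reachable_edge _ _
      · simpa using treeWeight_edge_le_weight hw hwN (a := ⟨t, ht⟩) (b := ⟨u, hu⟩) q
    · refine ⟨⊥, fun x hx => absurd ((by simpa using hx : (x : V) = u) ▸ x.2) hu, ?_⟩
      simpa using q.weight_nonneg hw
  | @cons u c v h p ih =>
    by_cases hu : u ∈ T
    · obtain ⟨Q, hQ, hQw⟩ := ih hu (.cons h .nil)
      refine ⟨edge ⟨t, ht⟩ ⟨u, hu⟩ ⊔ Q, fun x hx => ?_, ?_⟩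
      · have htu := (reachable_edge (⟨t, ht⟩ : T) ⟨u, hu⟩).mono (le_sup_left (b := Q))
        rcases List.mem_cons.1 hx with hxu | hxp
        · obtain rfl : x = ⟨u, hu⟩ := Subtype.ext hxu
          exact htu
        · exact htu.trans ((hQ x hxp).mono le_sup_right)
      · have := treeWeight_sup_le (nonneg_of_eq_wdist hw hwN) (edge ⟨t, ht⟩ ⟨u, hu⟩) Q
        have := treeWeight_edge_le_weight hw hwN (a := ⟨t, ht⟩) (b := ⟨u, hu⟩) q
        simp only [Walk.weight_cons, Walk.weight_nil] at hQw ⊢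
        linarith
    · obtain ⟨Q, hQ, hQw⟩ := ih ht (q.concat h)
      refine ⟨Q, fun x hx => hQ x ?_, by simpa [add_assoc] using hQw⟩
      exact (List.mem_cons.1 hx).resolve_left fun hxu => hu (hxu ▸ x.2)

lemma exists_connected_weight_le_of_walk (hw : ∀ e, 0 ≤ w e)
    (hwN : ∀ a b : T, wN s(a, b) = wdist G w a b) {t v : V} (ht : t ∈ T) (p : G.Walk t v)
    (hp : ∀ x ∈ T, x ∈ p.support) :
    ∃ Q : SimpleGraph T, Q.Connected ∧ treeWeight Q wN ≤ p.weight w := by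
  obtain ⟨Q, hQ, hQw⟩ := exists_reachable_weight_le_of_walk hw hwN p ht .nil
  exact ⟨Q, (connected_iff_exists_forall_reachable Q).2 ⟨_, fun x => hQ x (hp x x.2)⟩,
    by simpa using hQw⟩

end SimpleGraph

theorem metric_completion_mst_le_two_steiner_general {V : Type*} [Fintype V]
    (G : SimpleGraph V) (w : Sym2 V → ℝ)
    (hw : ∀ e, 0 ≤ w e)
    (T : Set V) (hT : 2 ≤ T.ncard)
    (wN : Sym2 ↥T → ℝ) (hwN : ∀ a b : ↥T, wN s(a, b) = wdist G w ↑a ↑b)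
    (H : SimpleGraph ↥T) (hH : IsMST (⊤ : SimpleGraph ↥T) wN H)
    (St : G.Subgraph) (hStConn : St.Connected) (hStT : T ⊆ St.verts) :
    treeWeight H wN ≤ 2 * subgraphWeight St w := by
  obtain ⟨t, ht⟩ : T.Nonempty := Set.nonempty_of_ncard_ne_zero (by omega)
  obtain ⟨p, hpSt, hpw⟩ := hStConn.exists_closed_walk_weight_le hw (hStT ht)
  obtain ⟨Q, hQ, hQw⟩ :=
    exists_connected_weight_le_of_walk hw hwN ht p fun x hx => hpSt x (hStT hx)
  obtain ⟨H', hH'Q, hH'⟩ := hQ.exists_isTree_le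
  calc treeWeight H wN ≤ treeWeight H' wN := hH.2 H' ⟨le_top, hH'⟩
    _ ≤ treeWeight Q wN := treeWeight_mono (nonneg_of_eq_wdist hw hwN) hH'Q
    _ ≤ p.weight w := hQw
    _ ≤ 2 * subgraphWeight St w := hpw

/-- The minimum spanning tree `H` of the metric completion of a terminal set `T`
(`|T| ≥ 2`) of a finite connected graph `G` with nonnegative weights has total weight at
most twice the weight of any Steiner tree for `T` in `G`, i.e. of any connected subgraph
of `G` whose vertex set contains `T`. -/
theorem metric_completion_mst_le_two_steiner {V : Type*} [Fintype V]
    (G : SimpleGraph V) (w : Sym2 V → ℝ)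
    (hG : G.Connected) (hw : ∀ e, 0 ≤ w e)
    (T : Set V) (hT : 2 ≤ T.ncard)
    (wN : Sym2 ↥T → ℝ) (hwN : ∀ a b : ↥T, wN s(a, b) = wdist G w ↑a ↑b)
    (H : SimpleGraph ↥T) (hH : IsMST (⊤ : SimpleGraph ↥T) wN H)
    (St : G.Subgraph) (hStConn : St.Connected) (hStT : T ⊆ St.verts) :
    treeWeight H wN ≤ 2 * subgraphWeight St w :=
  metric_completion_mst_le_two_steiner_general G w hw T hT wN hwN H hH St hStConn hStT
end
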